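/- arXiv:0811.2312 — 2 statements merged into one kernel-verified Lean document; each statement's English description precedes it below -/
import Mathlib

section
/- Let Alice prepare a qubit in an eigenstate of σ_x with prior probabilities (1+δ)/2 and (1−δ)/2 (−1 ≤ δ ≤ 1), and let Bob measure with the two-outcome POVM M_± = (1/2)((1 ± R_0)I ± R⃗·σ⃗), where R⃗ = (R_x, R_y, R_z), R = |R⃗| > 0, and |R_0| + R ≤ 1. Then Bob's mutual information about the σ_x basis satisfies I_x ≤ R_x²/R². -/
/-!
Let `n = R_x / R`. Measuring the spin along `R̂` on `|1_x⟩` (resp. `|2_x⟩`) gives "up" with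
probability `(1 + n)/2` (resp. `(1 - n)/2`), and `M_+ = w₊ P_↑ + w₋ P_↓` with
`w_± = (1 + R₀ ± R)/2`. So Bob's outcome is a classical post-processing of the output of a binary
symmetric channel with parameter `(1 + n)/2`, and by the data-processing inequality (concavity of
entropy) `I_x ≤ 1 - h₂((1 + n)/2)` bits. Finally `h₂(q) ≥ 4q(1 - q)`: writing
`-log q / (1 - q) = ∫₀¹ ds / (q + (1 - q)s)`, the binary entropy is `q(1 - q)` times the integral of
`1/x + 1/y` with `x + y = 1 + s`, and AM–HM bounds this below by `∫₀¹ 4 ds / (1 + s) = 4 log 2`.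
-/

open scoped BigOperators ComplexOrder
open Matrix

noncomputable section

/-- Shannon entropy (in bits) of a finitely-indexed probability vector. -/
def shannonEntropy {ι : Type*} [Fintype ι] (q : ι → ℝ) : ℝ :=
  -∑ i, q i * Real.logb 2 (q i)

/-- Born probability ⟨v|M|v⟩ of POVM element `M` on the (unit vector) state `v`. -/
def outProb {d : ℕ} (M : Matrix (Fin d) (Fin d) ℂ) (v : Fin d → ℂ) : ℝ :=
  (star v ⬝ᵥ M.mulVec v).re

/-- A finite family of matrices is a POVM if each member is positive semidefinite
and they sum to the identity. -/
def IsPOVM {d : ℕ} {S : Type*} [Fintype S] (E : S → Matrix (Fin d) (Fin d) ℂ) : Prop :=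
  (∀ s, (E s).PosSemidef) ∧ ∑ s, E s = 1

/-- `B` lists the vectors of an orthonormal basis of ℂ^d. -/
def IsONB {d : ℕ} (B : Fin d → Fin d → ℂ) : Prop :=
  ∀ i j, star (B i) ⬝ᵥ B j = if i = j then 1 else 0

/-- Two bases of ℂ^d are mutually unbiased: all squared overlaps equal 1/d. -/
def AreMUB {d : ℕ} (B C : Fin d → Fin d → ℂ) : Prop :=
  ∀ i j, ‖star (B i) ⬝ᵥ C j‖ ^ 2 = 1 / d

/-- Mutual information (in bits) between Alice's input `i` (prior `p i`, state `B i`)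
and Bob's POVM outcome `s`:  `I = H({p i}) - ∑ s p(s) H({p_{i|s}})`. -/
def mutInfo {d : ℕ} {S : Type*} [Fintype S] (B : Fin d → Fin d → ℂ) (p : Fin d → ℝ)
    (E : S → Matrix (Fin d) (Fin d) ℂ) : ℝ :=
  shannonEntropy p -
    ∑ s, (∑ i, p i * outProb (E s) (B i)) *
      shannonEntropy (fun i =>
        p i * outProb (E s) (B i) / ∑ j, p j * outProb (E s) (B j))

/-- The eigenbasis of the Pauli matrix σ_x : (1,1)/√2 and (1,-1)/√2. -/
def xbasis : Fin 2 → Fin 2 → ℂ :=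
  ![![(Real.sqrt 2 : ℂ)⁻¹, (Real.sqrt 2 : ℂ)⁻¹],
    ![(Real.sqrt 2 : ℂ)⁻¹, -(Real.sqrt 2 : ℂ)⁻¹]]

/-- The eigenbasis of the Pauli matrix σ_y : (1,i)/√2 and (1,-i)/√2. -/
def ybasis : Fin 2 → Fin 2 → ℂ :=
  ![![(Real.sqrt 2 : ℂ)⁻¹, (Real.sqrt 2 : ℂ)⁻¹ * Complex.I],
    ![(Real.sqrt 2 : ℂ)⁻¹, -((Real.sqrt 2 : ℂ)⁻¹ * Complex.I)]]

/-- The eigenbasis of the Pauli matrix σ_z : the standard basis. -/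
def zbasis : Fin 2 → Fin 2 → ℂ := ![![1, 0], ![0, 1]]

/-- The Pauli matrix σ_x. -/
def pauliX : Matrix (Fin 2) (Fin 2) ℂ := !![0, 1; 1, 0]

/-- The Pauli matrix σ_y. -/
def pauliY : Matrix (Fin 2) (Fin 2) ℂ := !![0, -Complex.I; Complex.I, 0]

/-- The Pauli matrix σ_z. -/
def pauliZ : Matrix (Fin 2) (Fin 2) ℂ := !![1, 0; 0, -1]


open Real

theorem integral_inv_affine {a b : ℝ} (ha : 0 < a) (hb : 0 < b) (hab : a ≠ b) :
    ∫ s in (0 : ℝ)..1, ((b - a) * s + a)⁻¹ = (log b - log a) / (b - a) := by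
  rw [intervalIntegral.integral_comp_mul_add (fun x => x⁻¹) (sub_ne_zero.2 hab.symm)]
  simp only [mul_zero, zero_add, mul_one, sub_add_cancel, smul_eq_mul]
  rw [integral_inv_of_pos ha hb, log_div hb.ne' ha.ne', div_eq_inv_mul]

theorem intervalIntegrable_inv_affine {c d : ℝ} (hd : 0 < d) (hcd : 0 < c + d) :
    IntervalIntegrable (fun s => (c * s + d)⁻¹) MeasureTheory.volume 0 1 := by
  refine intervalIntegral.intervalIntegrable_inv (fun s hs => ?_) (by fun_prop)
  rw [Set.uIcc_of_le zero_le_one] at hs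
  nlinarith [mul_nonneg hs.1 hcd.le, mul_nonneg (sub_nonneg.2 hs.2) hd.le, mul_pos hd hcd]

theorem binEntropy_eq_integral {p : ℝ} (hp0 : 0 < p) (hp1 : p < 1) :
    binEntropy p =
      p * (1 - p) * ∫ s in (0 : ℝ)..1, (((1 - p) * s + p)⁻¹ + (p * s + (1 - p))⁻¹) := by
  have h₁ := integral_inv_affine hp0 one_pos hp1.ne
  have h₂ := integral_inv_affine (sub_pos.2 hp1) one_pos (by linarith : 1 - p ≠ 1)
  rw [sub_sub_cancel] at h₂
  have h1p : 1 - p ≠ 0 := by linarith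
  rw [intervalIntegral.integral_add (intervalIntegrable_inv_affine hp0 (by linarith))
    (intervalIntegrable_inv_affine (by linarith) (by linarith)), h₁, h₂, binEntropy,
    log_inv, log_inv, log_one]
  field_simp
  ring

theorem four_mul_log_two_mul_le_binEntropy {p : ℝ} (hp0 : 0 ≤ p) (hp1 : p ≤ 1) :
    4 * log 2 * (p * (1 - p)) ≤ binEntropy p := by
  rcases hp0.eq_or_lt with rfl | hp0
  · simp
  rcases hp1.eq_or_lt with rfl | hp1
  · simp
  have hmean : ∀ x y : ℝ, 0 < x → 0 < y → 4 * (x + y)⁻¹ ≤ x⁻¹ + y⁻¹ := by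
    intro x y hx hy
    rw [← div_eq_mul_inv, inv_add_inv hx.ne' hy.ne',
      div_le_div_iff₀ (by positivity) (by positivity)]
    nlinarith [sq_nonneg (x - y)]
  have hlog : ∫ s in (0 : ℝ)..1, (1 * s + 1)⁻¹ = log 2 := by norm_num
  calc 4 * log 2 * (p * (1 - p)) = p * (1 - p) * ∫ s in (0 : ℝ)..1, 4 * (1 * s + 1)⁻¹ := by
        rw [intervalIntegral.integral_const_mul, hlog]
        ring
    _ ≤ p * (1 - p) * ∫ s in (0 : ℝ)..1, (((1 - p) * s + p)⁻¹ + (p * s + (1 - p))⁻¹) := by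
        gcongr
        refine intervalIntegral.integral_mono_on zero_le_one
          ((intervalIntegrable_inv_affine one_pos (by norm_num)).const_mul 4)
          ((intervalIntegrable_inv_affine hp0 (by linarith)).add
            (intervalIntegrable_inv_affine (by linarith) (by linarith))) fun s hs => ?_
        convert hmean ((1 - p) * s + p) (p * s + (1 - p)) (by nlinarith [hs.1])
          (by nlinarith [hs.1]) using 3
        ring
    _ = binEntropy p := (binEntropy_eq_integral hp0 hp1).symm

section ChannelInfo

variable {ι S : Type*} [Fintype ι] [Fintype S]

/-- On the column `s` of a joint distribution this is `p(s) H({p_{i|s}})`, in nats. -/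
def scaledEntropy (v : ι → ℝ) : ℝ :=
  (∑ i, v i) * ∑ i, negMulLog (v i / ∑ j, v j)

/-- Mutual information, in nats, between an input of law `p` and the output of the channel `W`. -/
def channelInfo (p : ι → ℝ) (W : Matrix ι S ℝ) : ℝ :=
  ∑ i, negMulLog (p i) - ∑ s, scaledEntropy fun i => p i * W i s

theorem shannonEntropy_eq_sum_negMulLog_div_log (q : ι → ℝ) :
    shannonEntropy q = (∑ i, negMulLog (q i)) / log 2 := by
  simp only [shannonEntropy, negMulLog, logb, Finset.sum_div, ← Finset.sum_neg_distrib]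
  congr 1 with i
  ring

theorem mutInfo_eq_channelInfo_div_log {d : ℕ} (B : Fin d → Fin d → ℂ) (p : Fin d → ℝ)
    (E : S → Matrix (Fin d) (Fin d) ℂ) :
    mutInfo B p E = channelInfo p (Matrix.of fun i s => outProb (E s) (B i)) / log 2 := by
  simp only [mutInfo, channelInfo, scaledEntropy, shannonEntropy_eq_sum_negMulLog_div_log,
    Matrix.of_apply, sub_div, Finset.sum_div, mul_div_assoc]

theorem scaledEntropy_smul (c : ℝ) (v : ι → ℝ) :
    scaledEntropy (c • v) = c * scaledEntropy v := by
  rcases eq_or_ne c 0 with rfl | hc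
  · simp [scaledEntropy]
  simp only [scaledEntropy, Pi.smul_apply, smul_eq_mul, ← Finset.mul_sum,
    mul_div_mul_left _ _ hc, mul_assoc]

theorem scaledEntropy_eq_sum_negMulLog_sub {v : ι → ℝ} (hv : 0 ≤ v) :
    scaledEntropy v = ∑ i, negMulLog (v i) - negMulLog (∑ i, v i) := by
  rcases (Fintype.sum_nonneg hv).eq_or_lt with hV | hV
  · obtain rfl := (Fintype.sum_eq_zero_iff_of_nonneg hv).1 hV.symm
    simp [scaledEntropy]
  simp only [scaledEntropy, div_eq_mul_inv, negMulLog_mul, Finset.sum_add_distrib, ← Finset.mul_sum,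
    ← Finset.sum_mul]
  simp only [negMulLog, log_inv]
  field_simp
  ring

theorem mul_negMulLog_div_add_le {a b c d : ℝ} (ha : 0 ≤ a) (hc : 0 ≤ c) (hb : 0 < b)
    (hd : 0 < d) :
    b * negMulLog (a / b) + d * negMulLog (c / d) ≤ (b + d) * negMulLog ((a + c) / (b + d)) := by
  have hbd : 0 < b + d := add_pos hb hd
  have h := concaveOn_negMulLog.2 (Set.mem_Ici.2 (div_nonneg ha hb.le))
    (Set.mem_Ici.2 (div_nonneg hc hd.le)) (div_nonneg hb.le hbd.le) (div_nonneg hd.le hbd.le)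
    (by rw [← add_div, div_self hbd.ne'])
  have hmix : b / (b + d) * (a / b) + d / (b + d) * (c / d) = (a + c) / (b + d) := by
    field_simp
  simp only [smul_eq_mul, hmix] at h
  calc b * negMulLog (a / b) + d * negMulLog (c / d)
      = (b + d) * (b / (b + d) * negMulLog (a / b) + d / (b + d) * negMulLog (c / d)) := by
        field_simp
    _ ≤ (b + d) * negMulLog ((a + c) / (b + d)) := by gcongr

theorem le_scaledEntropy_add {x y : ι → ℝ} (hx : 0 ≤ x) (hy : 0 ≤ y) :
    scaledEntropy x + scaledEntropy y ≤ scaledEntropy (x + y) := by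
  rcases (Fintype.sum_nonneg hx).eq_or_lt with hX | hX
  · obtain rfl := (Fintype.sum_eq_zero_iff_of_nonneg hx).1 hX.symm
    simp [scaledEntropy]
  rcases (Fintype.sum_nonneg hy).eq_or_lt with hY | hY
  · obtain rfl := (Fintype.sum_eq_zero_iff_of_nonneg hy).1 hY.symm
    simp [scaledEntropy]
  have hsum : ∑ i, (x + y) i = ∑ i, x i + ∑ i, y i := Finset.sum_add_distrib
  unfold scaledEntropy
  rw [hsum, Finset.mul_sum, Finset.mul_sum, Finset.mul_sum, ← Finset.sum_add_distrib]
  gcongr with i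
  exact mul_negMulLog_div_add_le (hx i) (hy i) hX hY

theorem sum_scaledEntropy_le {κ : Type*} {v : κ → ι → ℝ} (hv : ∀ j, 0 ≤ v j) (t : Finset κ) :
    ∑ j ∈ t, scaledEntropy (v j) ≤ scaledEntropy (∑ j ∈ t, v j) := by
  induction t using Finset.cons_induction with
  | empty => simp [scaledEntropy]
  | cons j t hj ih =>
    rw [Finset.sum_cons, Finset.sum_cons]
    calc scaledEntropy (v j) + ∑ k ∈ t, scaledEntropy (v k)
        ≤ scaledEntropy (v j) + scaledEntropy (∑ k ∈ t, v k) := by gcongr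
      _ ≤ scaledEntropy (v j + ∑ k ∈ t, v k) :=
        le_scaledEntropy_add (hv j) (Finset.sum_nonneg fun k _ => hv k)

/-- The data-processing inequality. -/
theorem channelInfo_mul_le {κ : Type*} [Fintype κ] {p : ι → ℝ} {K : Matrix ι κ ℝ}
    {V : Matrix κ S ℝ} (hp : 0 ≤ p) (hK : ∀ i j, 0 ≤ K i j)
    (hV : ∀ j s, 0 ≤ V j s) (hV1 : ∀ j, ∑ s, V j s = 1) :
    channelInfo p (K * V) ≤ channelInfo p K := by
  set c : κ → ι → ℝ := fun j i => p i * K i j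
  have hcol : ∀ s, (fun i => p i * (K * V) i s) = ∑ j, V j s • c j := by
    intro s
    ext i
    simp only [Matrix.mul_apply, Finset.mul_sum, Finset.sum_apply, Pi.smul_apply, smul_eq_mul, c]
    exact Finset.sum_congr rfl fun j _ => by ring
  unfold channelInfo
  gcongr
  calc ∑ j, scaledEntropy (c j) = ∑ j, ∑ s, V j s * scaledEntropy (c j) := by
        simp only [← Finset.sum_mul, hV1, one_mul]
    _ = ∑ s, ∑ j, scaledEntropy (V j s • c j) := by
        rw [Finset.sum_comm]
        simp only [scaledEntropy_smul]
    _ ≤ ∑ s, scaledEntropy (∑ j, V j s • c j) := by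
        gcongr with s
        exact sum_scaledEntropy_le (fun j i => mul_nonneg (hV j s) (mul_nonneg (hp i) (hK i j))) _
    _ = ∑ s, scaledEntropy fun i => p i * (K * V) i s := by simp only [hcol]

theorem channelInfo_eq_sub {p : ι → ℝ} {W : Matrix ι S ℝ} (hp : 0 ≤ p) (hW : ∀ i s, 0 ≤ W i s)
    (hW1 : ∀ i, ∑ s, W i s = 1) :
    channelInfo p W = ∑ s, negMulLog (∑ i, p i * W i s) - ∑ i, p i * ∑ s, negMulLog (W i s) := by
  simp only [channelInfo, fun s => scaledEntropy_eq_sum_negMulLog_sub (v := fun i => p i * W i s)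
    fun i => mul_nonneg (hp i) (hW i s), negMulLog_mul, Finset.sum_sub_distrib,
    Finset.sum_add_distrib]
  rw [Finset.sum_comm (f := fun s i => W i s * negMulLog (p i)),
    Finset.sum_comm (f := fun s i => p i * negMulLog (W i s))]
  simp only [← Finset.sum_mul, ← Finset.mul_sum, hW1, one_mul]
  ring

end ChannelInfo

section BinaryChannel

def binaryChannel (a b : ℝ) : Matrix (Fin 2) (Fin 2) ℝ := !![a, 1 - a; b, 1 - b]

variable {a b : ℝ}

theorem binaryChannel_nonneg (ha0 : 0 ≤ a) (ha1 : a ≤ 1) (hb0 : 0 ≤ b) (hb1 : b ≤ 1) :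
    ∀ i j, 0 ≤ binaryChannel a b i j := by
  intro i j
  fin_cases i <;> fin_cases j <;> simp [binaryChannel, *]

theorem sum_binaryChannel (i : Fin 2) : ∑ j, binaryChannel a b i j = 1 := by
  fin_cases i <;> simp [binaryChannel]

end BinaryChannel

theorem channelInfo_binarySymmetric_le {p : Fin 2 → ℝ} (hp : 0 ≤ p) (hp1 : p 0 + p 1 = 1)
    {q : ℝ} (hq0 : 0 ≤ q) (hq1 : q ≤ 1) :
    channelInfo p (binaryChannel q (1 - q)) ≤ log 2 - binEntropy q := by
  have hrow : ∀ i, ∑ j, negMulLog (binaryChannel q (1 - q) i j) = binEntropy q := by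
    intro i
    fin_cases i <;>
      simp [binaryChannel, binEntropy_eq_negMulLog_add_negMulLog_one_sub, add_comm]
  have hout : ∑ j, negMulLog (∑ i, p i * binaryChannel q (1 - q) i j)
      = binEntropy (p 0 * q + p 1 * (1 - q)) := by
    rw [binEntropy_eq_negMulLog_add_negMulLog_one_sub]
    simp only [Fin.sum_univ_two, binaryChannel, of_apply, cons_val', cons_val_zero, cons_val_one,
      cons_val_fin_one]
    congr 2
    linear_combination hp1
  rw [channelInfo_eq_sub hp (binaryChannel_nonneg hq0 hq1 (by linarith) (by linarith))
    sum_binaryChannel, hout]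
  simp only [hrow, ← Finset.sum_mul, Fin.sum_univ_two, hp1, one_mul]
  linarith [binEntropy_le_log_two (p := p 0 * q + p 1 * (1 - q))]

section OutProb

variable {d : ℕ} (M N : Matrix (Fin d) (Fin d) ℂ) (v : Fin d → ℂ)

theorem outProb_add : outProb (M + N) v = outProb M v + outProb N v := by
  simp [outProb, add_mulVec, dotProduct_add]

theorem outProb_sub : outProb (M - N) v = outProb M v - outProb N v := by
  simp [outProb, sub_mulVec, dotProduct_sub]

theorem outProb_smul (r : ℝ) : outProb (r • M) v = r * outProb M v := by
  simp [outProb, smul_mulVec, dotProduct_smul]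

end OutProb

theorem outProb_one_xbasis (i : Fin 2) : outProb 1 (xbasis i) = 1 := by
  fin_cases i <;> norm_num [outProb, xbasis, dotProduct, Fin.sum_univ_two, div_mul_div_comm]

theorem outProb_pauliX_xbasis (i : Fin 2) : outProb pauliX (xbasis i) = ![1, -1] i := by
  fin_cases i <;>
    norm_num [outProb, xbasis, pauliX, dotProduct, mulVec, Fin.sum_univ_two, div_mul_div_comm]

theorem outProb_pauliY_xbasis (i : Fin 2) : outProb pauliY (xbasis i) = 0 := by
  fin_cases i <;> simp [outProb, xbasis, pauliY, dotProduct, mulVec, Fin.sum_univ_two]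

theorem outProb_pauliZ_xbasis (i : Fin 2) : outProb pauliZ (xbasis i) = 0 := by
  fin_cases i <;> simp [outProb, xbasis, pauliZ, dotProduct, mulVec, Fin.sum_univ_two]

theorem outProb_pauli_xbasis (x y z : ℝ) (i : Fin 2) :
    outProb (x • pauliX + y • pauliY + z • pauliZ) (xbasis i) = x * ![1, -1] i := by
  rw [outProb_add, outProb_add, outProb_smul, outProb_smul, outProb_smul, outProb_pauliX_xbasis,
    outProb_pauliY_xbasis, outProb_pauliZ_xbasis]
  ring

theorem outProb_xbasis_eq_binaryChannel_mul {R0 Rx Ry Rz R : ℝ} (hR : R ≠ 0)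
    {E : Fin 2 → Matrix (Fin 2) (Fin 2) ℂ}
    (hE0 : E 0 = ((1 : ℝ) / 2) •
      ((1 + R0) • (1 : Matrix (Fin 2) (Fin 2) ℂ) + (Rx • pauliX + Ry • pauliY + Rz • pauliZ)))
    (hE1 : E 1 = ((1 : ℝ) / 2) •
      ((1 - R0) • (1 : Matrix (Fin 2) (Fin 2) ℂ) - (Rx • pauliX + Ry • pauliY + Rz • pauliZ))) :
    Matrix.of (fun i s => outProb (E s) (xbasis i)) =
      binaryChannel ((1 + Rx / R) / 2) (1 - (1 + Rx / R) / 2) *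
        binaryChannel ((1 + R0 + R) / 2) ((1 + R0 - R) / 2) := by
  have hE : ∀ i, outProb (E 0) (xbasis i) = (1 + R0 + Rx * ![1, -1] i) / 2 ∧
      outProb (E 1) (xbasis i) = (1 - R0 - Rx * ![1, -1] i) / 2 := by
    intro i
    rw [hE0, hE1, outProb_smul, outProb_smul, outProb_add, outProb_sub, outProb_smul,
      outProb_smul, outProb_one_xbasis, outProb_pauli_xbasis]
    constructor <;> ring
  ext i s
  fin_cases i <;> fin_cases s <;>
    simp only [Fin.zero_eta, Fin.mk_one, Fin.isValue, of_apply, hE, cons_val_zero, cons_val_one,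
      cons_val', cons_val_fin_one, Matrix.mul_apply, Fin.sum_univ_two, binaryChannel] <;>
    field_simp <;> ring

/-- For the σ_x eigenbasis with priors `(1±δ)/2` and the two-outcome POVM
`M_± = ½((1 ± R₀)I ± R⃗·σ⃗)` with `|R₀| + R ≤ 1`, `R = |R⃗| > 0`, one has
`I_x ≤ R_x²/R²`. -/
theorem pauli_x_info_bound (δ R0 Rx Ry Rz R : ℝ)
    (hδ : -1 ≤ δ ∧ δ ≤ 1)
    (hR : R = Real.sqrt (Rx ^ 2 + Ry ^ 2 + Rz ^ 2)) (hRpos : 0 < R)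
    (hnorm : |R0| + R ≤ 1)
    (E : Fin 2 → Matrix (Fin 2) (Fin 2) ℂ)
    (hE0 : E 0 = ((1 : ℝ) / 2) •
      ((1 + R0) • (1 : Matrix (Fin 2) (Fin 2) ℂ)
        + (Rx • pauliX + Ry • pauliY + Rz • pauliZ)))
    (hE1 : E 1 = ((1 : ℝ) / 2) •
      ((1 - R0) • (1 : Matrix (Fin 2) (Fin 2) ℂ)
        - (Rx • pauliX + Ry • pauliY + Rz • pauliZ))) :
    mutInfo xbasis ![(1 + δ) / 2, (1 - δ) / 2] E ≤ Rx ^ 2 / R ^ 2 := by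
  obtain ⟨hδ₁, hδ₂⟩ := hδ
  have hn : |Rx / R| ≤ 1 := by
    rw [abs_div, abs_of_pos hRpos, div_le_one hRpos, hR]
    exact abs_le_sqrt (by nlinarith [sq_nonneg Ry, sq_nonneg Rz])
  obtain ⟨hn₁, hn₂⟩ := abs_le.1 hn
  obtain ⟨hR0₁, hR0₂⟩ := abs_le.1 (show |R0| ≤ 1 - R by linarith)
  set q := (1 + Rx / R) / 2 with hq
  have hq₀ : 0 ≤ q := by linarith
  have hq₁ : q ≤ 1 := by linarith
  have hp : 0 ≤ ![(1 + δ) / 2, (1 - δ) / 2] := Fin.forall_fin_two.2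
    ⟨show 0 ≤ (1 + δ) / 2 by linarith, show 0 ≤ (1 - δ) / 2 by linarith⟩
  rw [mutInfo_eq_channelInfo_div_log, outProb_xbasis_eq_binaryChannel_mul hRpos.ne' hE0 hE1,
    div_le_iff₀ (log_pos one_lt_two)]
  calc _ ≤ channelInfo _ (binaryChannel q (1 - q)) :=
        channelInfo_mul_le hp (binaryChannel_nonneg hq₀ hq₁ (by linarith) (by linarith))
          (binaryChannel_nonneg (by linarith) (by linarith) (by linarith) (by linarith))
          sum_binaryChannel
    _ ≤ log 2 - binEntropy q := channelInfo_binarySymmetric_le hp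
          (show (1 + δ) / 2 + (1 - δ) / 2 = 1 by ring) hq₀ hq₁
    _ ≤ log 2 - 4 * log 2 * (q * (1 - q)) := by
        gcongr
        exact four_mul_log_two_mul_le_binEntropy hq₀ hq₁
    _ = Rx ^ 2 / R ^ 2 * log 2 := by
        rw [hq]
        field_simp
        ring
end
end

section
/- (Security of the six-state protocol.) Let Alice prepare a qubit in an eigenstate of one of σ_x, σ_y, σ_z, choosing the two basis states of the chosen basis with equal probability 1/2. Let a joint receiver (Bob, Eve and Fred together) measure with an arbitrary POVM {M_s}, and let f, g, h be arbitrary functions on the outcome set (the coarse-grainings giving Bob's, Eve's, and Fred's outcomes respectively). Define I_x(A:B) as the mutual information between Alice's σ_x-basis input and f(s), I_y(A:E) between Alice's σ_y-basis input and g(s), and I_z(A:F) between Alice's σ_z-basis input and h(s). Then I_x(A:B) + I_y(A:E) + I_z(A:F) ≤ 1. -/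
open scoped BigOperators ComplexOrder
open Matrix

noncomputable section

/-- Coarse-grained mutual information: Alice sends `B i` with prior `p i`, the POVM
outcome `s` is coarse-grained to `f s`; the joint distribution is
`p_{ib} = p i * ∑_{s : f s = b} ⟨i|E s|i⟩`, and
`I = H({∑_b p_{ib}}_i) − ∑_b (∑_i p_{ib}) H({p_{ib}/∑_j p_{jb}}_i)`. -/
def mutInfoCG {d : ℕ} {S O : Type*} [Fintype S] [Fintype O] [DecidableEq O]
    (B : Fin d → Fin d → ℂ) (p : Fin d → ℝ)
    (E : S → Matrix (Fin d) (Fin d) ℂ) (f : S → O) : ℝ :=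
  shannonEntropy
      (fun i => ∑ b, p i * ∑ s ∈ Finset.univ.filter (fun s => f s = b), outProb (E s) (B i)) -
    ∑ b, (∑ i, p i * ∑ s ∈ Finset.univ.filter (fun s => f s = b), outProb (E s) (B i)) *
      shannonEntropy (fun i =>
        (p i * ∑ s ∈ Finset.univ.filter (fun s => f s = b), outProb (E s) (B i)) /
          ∑ j, p j * ∑ s ∈ Finset.univ.filter (fun s => f s = b), outProb (E s) (B j))

/-!
Coarse-graining the outcome can only increase the conditional entropy of Alice's input,
by concavity of entropy, so each `Iₘ` is at most the fine-grained
`1 - ∑ₛ (tr Eₛ / 2) Hₘ(s)`. For one outcome `s`, the three distributions `(pₘ, 1 - pₘ)`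
measured on `Eₛ / tr Eₛ` satisfy `∑ₘ (2pₘ - 1)² ≤ 1` (its Bloch vector lies in the unit
ball), and the binary entropy satisfies `h(p) ≥ 4p(1 - p) = 1 - (2p - 1)²`; hence
`∑ₘ Hₘ(s) ≥ 2`. The weights `tr Eₛ / 2` add up to `tr I / 2 = 1`, so
`∑ₘ Iₘ ≤ 3 - 2 = 1`.
-/

open Real Set

theorem nonneg_of_hasDerivAt_of_concaveOn {G φ : ℝ → ℝ} {a b : ℝ}
    (hG : ContinuousOn G (Icc a b)) (hGφ : ∀ x ∈ Ioo a b, HasDerivAt G (φ x) x)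
    (hφ : ConcaveOn ℝ (Ico a b) φ) (hφa : 0 ≤ φ a) (hGa : 0 ≤ G a) (hGb : 0 ≤ G b) :
    ∀ x ∈ Icc a b, 0 ≤ G x := by
  rintro x ⟨hax, hxb⟩
  obtain rfl | hxb := hxb.eq_or_lt
  · exact hGb
  have ha : a ∈ Ico a b := ⟨le_rfl, hax.trans_lt hxb⟩
  have hx : x ∈ Ico a b := ⟨hax, hxb⟩
  -- By concavity and `φ a ≥ 0`: either `φ ≥ 0` on `[a, x]`, or `φ < 0` on `[x, b)`.
  by_cases hφx : 0 ≤ φ x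
  · have hmono : MonotoneOn G (Icc a x) := by
      refine monotoneOn_of_hasDerivWithinAt_nonneg (f' := φ) (convex_Icc a x)
        (hG.mono (Icc_subset_Icc_right hxb.le)) (fun y hy => ?_) (fun y hy => ?_) <;>
        rw [interior_Icc] at hy
      · exact (hGφ y ⟨hy.1, hy.2.trans hxb⟩).hasDerivWithinAt
      · exact (le_min hφa hφx).trans (hφ.min_le_of_mem_Icc ha hx (Ioo_subset_Icc_self hy))
    exact hGa.trans (hmono (left_mem_Icc.2 hax) (right_mem_Icc.2 hax) hax)
  · have hanti : AntitoneOn G (Icc x b) := by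
      refine antitoneOn_of_hasDerivWithinAt_nonpos (f' := φ) (convex_Icc x b)
        (hG.mono (Icc_subset_Icc_left hax)) (fun y hy => ?_) (fun y hy => ?_) <;>
        rw [interior_Icc] at hy
      · exact (hGφ y ⟨hax.trans_lt hy.1, hy.2⟩).hasDerivWithinAt
      · have := hφ.min_le_of_mem_Icc ha ⟨hax.trans hy.1.le, hy.2⟩ ⟨hax, hy.1.le⟩
        rcases min_le_iff.1 this with h | h <;> linarith
    exact hGb.trans (hanti (left_mem_Icc.2 hxb.le) (right_mem_Icc.2 hxb.le) hxb.le)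

lemma hasDerivAt_log_one_sub_sub_log {x : ℝ} (h0 : 0 < x) (h1 : x < 1) :
    HasDerivAt (fun p => log (1 - p) - log p) (-(1 / (x * (1 - x)))) x := by
  have h := (((hasDerivAt_id x).const_sub 1).log (by simp; linarith)).sub
    ((hasDerivAt_id x).log h0.ne')
  refine h.congr_deriv ?_
  have : (1 : ℝ) - x ≠ 0 := by linarith
  simp only [id]
  field_simp
  ring

theorem four_mul_mul_one_sub_mul_log_two_le_binEntropy_of_two_inv_le {p : ℝ} (h0 : 2⁻¹ ≤ p)
    (h1 : p ≤ 1) : 4 * p * (1 - p) * log 2 ≤ binEntropy p := by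
  set φ : ℝ → ℝ := fun x => log (1 - x) - log x + 4 * (2 * x - 1) * log 2
  have hφ' : ∀ x ∈ Ioo (0 : ℝ) 1, HasDerivAt φ (8 * log 2 - 1 / (x * (1 - x))) x := by
    intro x hx
    refine ((hasDerivAt_log_one_sub_sub_log hx.1 hx.2).add
      ((((hasDerivAt_id x).const_mul 2).sub_const 1).const_mul 4 |>.mul_const (log 2))).congr_deriv
      ?_
    ring
  have hsub : Ico (2⁻¹ : ℝ) 1 ⊆ Ioo 0 1 := fun x hx => ⟨by linarith [hx.1], hx.2⟩
  have hφ : ConcaveOn ℝ (Ico 2⁻¹ 1) φ := by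
    refine AntitoneOn.concaveOn_of_deriv (convex_Ico _ _)
      (fun x hx => (hφ' x (hsub hx)).continuousAt.continuousWithinAt)
      (fun x hx => (hφ' x (hsub (interior_subset hx))).differentiableAt.differentiableWithinAt) ?_
    rw [interior_Ico]
    intro x hx y hy hxy
    rw [(hφ' x (hsub (Ioo_subset_Ico_self hx))).deriv,
      (hφ' y (hsub (Ioo_subset_Ico_self hy))).deriv]
    have : y * (1 - y) ≤ x * (1 - x) := by nlinarith [hx.1]
    have : 0 < y * (1 - y) := mul_pos (by linarith [hy.1]) (by linarith [hy.2])
    gcongr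
  have hG : ∀ x ∈ Ioo (2⁻¹ : ℝ) 1,
      HasDerivAt (fun x => binEntropy x - 4 * x * (1 - x) * log 2) (φ x) x := by
    intro x hx
    refine ((hasDerivAt_binEntropy (hsub (Ioo_subset_Ico_self hx)).1.ne' hx.2.ne).sub
      ((((hasDerivAt_id x).const_mul 4).mul ((hasDerivAt_id x).const_sub 1)).mul_const
        (log 2))).congr_deriv ?_
    simp only [φ, id]
    ring
  exact sub_nonneg.1 <| nonneg_of_hasDerivAt_of_concaveOn
    (G := fun x => binEntropy x - 4 * x * (1 - x) * log 2)
    (binEntropy_continuous.continuousOn.sub (by fun_prop)) hG hφ (by norm_num [φ])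
    (by simp only [binEntropy_two_inv]; norm_num) (by simp) p ⟨h0, h1⟩

theorem four_mul_mul_one_sub_mul_log_two_le_binEntropy {p : ℝ} (h0 : 0 ≤ p) (h1 : p ≤ 1) :
    4 * p * (1 - p) * log 2 ≤ binEntropy p := by
  rcases le_total 2⁻¹ p with hp | hp
  · exact four_mul_mul_one_sub_mul_log_two_le_binEntropy_of_two_inv_le hp h1
  · have h := four_mul_mul_one_sub_mul_log_two_le_binEntropy_of_two_inv_le (p := 1 - p)
      (by linarith) (by linarith)
    rw [binEntropy_one_sub] at h
    linarith

lemma shannonEntropy_eq_sum_negMulLog {ι : Type*} [Fintype ι] (q : ι → ℝ) :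
    shannonEntropy q = (∑ i, negMulLog (q i)) / log 2 := by
  simp only [shannonEntropy, negMulLog, logb, Finset.sum_div, ← Finset.sum_neg_distrib]
  exact Finset.sum_congr rfl fun i _ => by ring

lemma sum_mul_negMulLog_div_le {ι : Type*} (s : Finset ι) {a w : ι → ℝ}
    (ha : ∀ i ∈ s, 0 ≤ a i) (haw : ∀ i ∈ s, a i ≤ w i) :
    ∑ i ∈ s, w i * negMulLog (a i / w i) ≤
      (∑ i ∈ s, w i) * negMulLog ((∑ i ∈ s, a i) / ∑ i ∈ s, w i) := by
  have hw : ∀ i ∈ s, 0 ≤ w i := fun i hi => (ha i hi).trans (haw i hi)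
  obtain hW | hW := (Finset.sum_nonneg hw).eq_or_lt
  · have hw0 : ∀ i ∈ s, w i = 0 := (Finset.sum_eq_zero_iff_of_nonneg hw).1 hW.symm
    rw [← hW, zero_mul]
    exact (Finset.sum_eq_zero fun i hi => by rw [hw0 i hi, zero_mul]).le
  set W := ∑ i ∈ s, w i
  have jensen := concaveOn_negMulLog.le_map_sum (t := s) (w := fun i => w i / W)
    (p := fun i => a i / w i) (fun i hi => div_nonneg (hw i hi) hW.le)
    (by rw [← Finset.sum_div, div_self hW.ne'])
    (fun i hi => Set.mem_Ici.2 (div_nonneg (ha i hi) (hw i hi)))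
  have hmean : ∑ i ∈ s, (w i / W) • (a i / w i) = (∑ i ∈ s, a i) / W := by
    rw [Finset.sum_div]
    refine Finset.sum_congr rfl fun i hi => ?_
    obtain h | h := (hw i hi).eq_or_lt
    · rw [← h, le_antisymm (h ▸ haw i hi) (ha i hi)]
      simp
    · rw [smul_eq_mul]
      field_simp
  rw [hmean] at jensen
  simp only [smul_eq_mul, div_mul_eq_mul_div, ← Finset.sum_div] at jensen
  rwa [div_le_iff₀ hW, mul_comm] at jensen

def weightedEntropy {ι : Type*} [Fintype ι] (q : ι → ℝ) : ℝ :=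
  (∑ i, q i) * shannonEntropy (fun i => q i / ∑ j, q j)

/-- The conditional entropy `H(I | T)` of the joint weights `J i t`; with `J i t = p i · P(t | i)`
this is the term subtracted from `H(p)` in `mutInfo` and `mutInfoCG`. -/
def condEntropy {ι T : Type*} [Fintype ι] [Fintype T] (J : ι → T → ℝ) : ℝ :=
  ∑ t, weightedEntropy (fun i => J i t)

lemma weightedEntropy_eq {ι : Type*} [Fintype ι] (q : ι → ℝ) :
    weightedEntropy q = (∑ i, (∑ j, q j) * negMulLog (q i / ∑ j, q j)) / log 2 := by
  rw [weightedEntropy, shannonEntropy_eq_sum_negMulLog, mul_div_assoc', Finset.mul_sum]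

lemma sum_weightedEntropy_le {ι T : Type*} [Fintype ι] (s : Finset T) {q : T → ι → ℝ}
    (hq : ∀ t ∈ s, ∀ i, 0 ≤ q t i) :
    ∑ t ∈ s, weightedEntropy (q t) ≤ weightedEntropy (fun i => ∑ t ∈ s, q t i) := by
  simp only [weightedEntropy_eq, ← Finset.sum_div]
  gcongr
  rw [Finset.sum_comm]
  refine Finset.sum_le_sum fun i _ => ?_
  rw [Finset.sum_comm]
  exact sum_mul_negMulLog_div_le s (fun t ht => hq t ht i)
    (fun t ht => Finset.single_le_sum (fun j _ => hq t ht j) (Finset.mem_univ i))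

lemma condEntropy_le_fiberwise {ι T O : Type*} [Fintype ι] [Fintype T] [Fintype O]
    [DecidableEq O] {J : ι → T → ℝ} (hJ : ∀ i t, 0 ≤ J i t) (f : T → O) :
    condEntropy J ≤
      condEntropy (fun i b => ∑ t ∈ Finset.univ.filter (fun t => f t = b), J i t) := by
  rw [condEntropy, ← Finset.sum_fiberwise Finset.univ f]
  exact Finset.sum_le_sum fun b _ => sum_weightedEntropy_le _ fun t _ i => hJ i t

lemma four_mul_mul_div_le_weightedEntropy {q : Fin 2 → ℝ} (h0 : 0 ≤ q 0) (h1 : 0 ≤ q 1) :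
    4 * q 0 * q 1 / (q 0 + q 1) ≤ weightedEntropy q := by
  rw [weightedEntropy, Fin.sum_univ_two]
  obtain hW | hW := (add_nonneg h0 h1).eq_or_lt
  · simp [← hW]
  set W := q 0 + q 1
  have hH : shannonEntropy (fun i => q i / W) = binEntropy (q 0 / W) / log 2 := by
    rw [shannonEntropy_eq_sum_negMulLog, Fin.sum_univ_two,
      binEntropy_eq_negMulLog_add_negMulLog_one_sub, one_sub_div hW.ne']
    simp only [W, add_sub_cancel_left]
  have hbin := four_mul_mul_one_sub_mul_log_two_le_binEntropy (div_nonneg h0 hW.le)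
    (div_le_one_of_le₀ (le_add_of_nonneg_right h1) hW.le)
  rw [hH, ← mul_div_assoc, le_div_iff₀ (log_pos one_lt_two)]
  calc 4 * q 0 * q 1 / W * log 2 = W * (4 * (q 0 / W) * (1 - q 0 / W) * log 2) := by
        field_simp
        ring
    _ ≤ W * binEntropy (q 0 / W) := by gcongr

lemma outProb_nonneg {d : ℕ} {M : Matrix (Fin d) (Fin d) ℂ} (hM : M.PosSemidef)
    (v : Fin d → ℂ) : 0 ≤ outProb M v :=
  hM.re_dotProduct_nonneg v

lemma outProb_sum {d : ℕ} {S : Type*} (s : Finset S) (E : S → Matrix (Fin d) (Fin d) ℂ)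
    (v : Fin d → ℂ) : ∑ t ∈ s, outProb (E t) v = outProb (∑ t ∈ s, E t) v := by
  simp only [outProb, Matrix.sum_mulVec, dotProduct_sum, Complex.re_sum]

lemma outProb_smul_s19 {d : ℕ} (M : Matrix (Fin d) (Fin d) ℂ) (c : ℂ) (v : Fin d → ℂ) :
    outProb M (c • v) = Complex.normSq c * outProb M v := by
  rw [outProb, outProb, star_smul, Matrix.mulVec_smul, dotProduct_smul, smul_dotProduct,
    smul_smul, smul_eq_mul, Complex.star_def, Complex.mul_conj, Complex.re_ofReal_mul]

theorem mutInfoCG_le_mutInfo {d : ℕ} {S O : Type*} [Fintype S] [Fintype O] [DecidableEq O]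
    {B : Fin d → Fin d → ℂ} {p : Fin d → ℝ} {E : S → Matrix (Fin d) (Fin d) ℂ}
    (hE : IsPOVM E) (hB : ∀ i, outProb 1 (B i) = 1) (hp : ∀ i, 0 ≤ p i) (f : S → O) :
    mutInfoCG B p E f ≤ mutInfo B p E := by
  have hmarg : (fun i => ∑ b, p i * ∑ s ∈ Finset.univ.filter (fun s => f s = b),
      outProb (E s) (B i)) = p := by
    funext i
    rw [← Finset.mul_sum, Finset.sum_fiberwise, outProb_sum, hE.2, hB, mul_one]
  have hcond := condEntropy_le_fiberwise
    (fun i s => mul_nonneg (hp i) (outProb_nonneg (hE.1 s) (B i))) f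
  simp only [← Finset.mul_sum] at hcond
  change shannonEntropy _ - condEntropy _ ≤ shannonEntropy p - condEntropy _
  rw [hmarg]
  linarith

lemma outProb_fin_two (M : Matrix (Fin 2) (Fin 2) ℂ) (v : Fin 2 → ℂ) :
    outProb M v = (star (v 0) * (M 0 0 * v 0 + M 0 1 * v 1)
      + star (v 1) * (M 1 0 * v 0 + M 1 1 * v 1)).re := by
  simp [outProb, dotProduct, Matrix.mulVec, Fin.sum_univ_two]

lemma outProb_inv_sqrt_two_smul (M : Matrix (Fin 2) (Fin 2) ℂ) {u : ℂ} (hu : star u * u = 1) :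
    outProb M ((√2 : ℂ)⁻¹ • ![1, u]) =
      ((M 0 0).re + (M 1 1).re + (M 0 1 * u).re + (star u * M 1 0).re) / 2 := by
  rw [outProb_smul_s19, outProb_fin_two, Complex.normSq_inv, Complex.normSq_ofReal,
    Real.mul_self_sqrt zero_le_two]
  simp only [Matrix.cons_val_zero, Matrix.cons_val_one, Matrix.cons_val_fin_one, star_one,
    one_mul, mul_one]
  rw [show M 0 0 + M 0 1 * u + star u * (M 1 0 + M 1 1 * u)
      = M 0 0 + M 1 1 + M 0 1 * u + star u * M 1 0 by linear_combination M 1 1 * hu]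
  simp only [Complex.add_re]
  ring

lemma outProb_xbasis_zero (M : Matrix (Fin 2) (Fin 2) ℂ) :
    outProb M (xbasis 0) = ((M 0 0).re + (M 1 1).re + (M 0 1).re + (M 1 0).re) / 2 := by
  rw [show xbasis 0 = (√2 : ℂ)⁻¹ • ![1, 1] by ext j; fin_cases j <;> simp [xbasis],
    outProb_inv_sqrt_two_smul M (by simp)]
  simp

lemma outProb_xbasis_one (M : Matrix (Fin 2) (Fin 2) ℂ) :
    outProb M (xbasis 1) = ((M 0 0).re + (M 1 1).re - (M 0 1).re - (M 1 0).re) / 2 := by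
  rw [show xbasis 1 = (√2 : ℂ)⁻¹ • ![1, -1] by ext j; fin_cases j <;> simp [xbasis],
    outProb_inv_sqrt_two_smul M (by simp)]
  simp [sub_eq_add_neg]

lemma outProb_ybasis_zero (M : Matrix (Fin 2) (Fin 2) ℂ) :
    outProb M (ybasis 0) = ((M 0 0).re + (M 1 1).re - (M 0 1).im + (M 1 0).im) / 2 := by
  rw [show ybasis 0 = (√2 : ℂ)⁻¹ • ![1, Complex.I] by ext j; fin_cases j <;> simp [ybasis],
    outProb_inv_sqrt_two_smul M (by simp)]
  simp [sub_eq_add_neg]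

lemma outProb_ybasis_one (M : Matrix (Fin 2) (Fin 2) ℂ) :
    outProb M (ybasis 1) = ((M 0 0).re + (M 1 1).re + (M 0 1).im - (M 1 0).im) / 2 := by
  rw [show ybasis 1 = (√2 : ℂ)⁻¹ • ![1, -Complex.I] by
      ext j; fin_cases j <;> simp [ybasis],
    outProb_inv_sqrt_two_smul M (by simp)]
  simp [sub_eq_add_neg]

lemma outProb_zbasis_zero (M : Matrix (Fin 2) (Fin 2) ℂ) :
    outProb M (zbasis 0) = (M 0 0).re := by
  simp [outProb_fin_two, zbasis]

lemma outProb_zbasis_one (M : Matrix (Fin 2) (Fin 2) ℂ) :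
    outProb M (zbasis 1) = (M 1 1).re := by
  simp [outProb_fin_two, zbasis]

lemma outProb_one_pauli {B : Fin 2 → Fin 2 → ℂ}
    (hB : B = xbasis ∨ B = ybasis ∨ B = zbasis) (i : Fin 2) : outProb 1 (B i) = 1 := by
  rcases hB with rfl | rfl | rfl <;> fin_cases i <;>
    simp [outProb_xbasis_zero, outProb_xbasis_one, outProb_ybasis_zero, outProb_ybasis_one,
      outProb_zbasis_zero, outProb_zbasis_one]

lemma outProb_add_outProb_pauli (M : Matrix (Fin 2) (Fin 2) ℂ) {B : Fin 2 → Fin 2 → ℂ}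
    (hB : B = xbasis ∨ B = ybasis ∨ B = zbasis) :
    outProb M (B 0) + outProb M (B 1) = M.trace.re := by
  rcases hB with rfl | rfl | rfl <;>
  simp only [outProb_xbasis_zero, outProb_xbasis_one, outProb_ybasis_zero, outProb_ybasis_one,
    outProb_zbasis_zero, outProb_zbasis_one, Matrix.trace_fin_two, Complex.add_re] <;> ring

lemma normSq_apply_zero_one_le {M : Matrix (Fin 2) (Fin 2) ℂ} (hM : M.PosSemidef) :
    Complex.normSq (M 0 1) ≤ (M 0 0).re * (M 1 1).re := by
  have hdet := (Complex.nonneg_iff.1 hM.det_nonneg).1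
  rw [Matrix.det_fin_two, ← (hM.isHermitian.apply 1 0), ← hM.isHermitian.coe_re_apply_self 0,
    ← hM.isHermitian.coe_re_apply_self 1, Complex.star_def, Complex.mul_conj] at hdet
  simpa using hdet

lemma pauli_bloch_norm_sq_le {M : Matrix (Fin 2) (Fin 2) ℂ} (hM : M.PosSemidef) :
    (outProb M (xbasis 0) - outProb M (xbasis 1)) ^ 2
      + (outProb M (ybasis 0) - outProb M (ybasis 1)) ^ 2
      + (outProb M (zbasis 0) - outProb M (zbasis 1)) ^ 2 ≤ M.trace.re ^ 2 := by
  have h10 : M 1 0 = star (M 0 1) := (hM.isHermitian.apply 1 0).symm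
  have hnorm := normSq_apply_zero_one_le hM
  rw [Complex.normSq_apply] at hnorm
  rw [outProb_xbasis_zero, outProb_xbasis_one, outProb_ybasis_zero, outProb_ybasis_one,
    outProb_zbasis_zero, outProb_zbasis_one, Matrix.trace_fin_two, Complex.add_re, h10,
    Complex.star_def, Complex.conj_re, Complex.conj_im]
  nlinarith

lemma trace_le_sum_weightedEntropy_pauli {M : Matrix (Fin 2) (Fin 2) ℂ} (hM : M.PosSemidef) :
    M.trace.re ≤ weightedEntropy (fun i => 1 / 2 * outProb M (xbasis i))
      + weightedEntropy (fun i => 1 / 2 * outProb M (ybasis i))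
      + weightedEntropy (fun i => 1 / 2 * outProb M (zbasis i)) := by
  have ht : 0 ≤ M.trace.re := outProb_add_outProb_pauli M (B := zbasis) (by simp) ▸
    add_nonneg (outProb_nonneg hM _) (outProb_nonneg hM _)
  set t := M.trace.re
  have hbound : ∀ B : Fin 2 → Fin 2 → ℂ, B = xbasis ∨ B = ybasis ∨ B = zbasis →
      (t ^ 2 - (outProb M (B 0) - outProb M (B 1)) ^ 2) / 2 / t ≤
        weightedEntropy (fun i => 1 / 2 * outProb M (B i)) := by
    intro B hB
    have hq0 := outProb_nonneg hM (B 0)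
    have hq1 := outProb_nonneg hM (B 1)
    have htB : outProb M (B 0) + outProb M (B 1) = t := outProb_add_outProb_pauli M hB
    refine le_of_eq_of_le ?_ (four_mul_mul_div_le_weightedEntropy (by positivity) (by positivity))
    rw [show 1 / 2 * outProb M (B 0) + 1 / 2 * outProb M (B 1) = t / 2 by linarith,
      div_div_eq_mul_div, ← htB]
    ring
  have hbloch := pauli_bloch_norm_sq_le hM
  have hsum : t ≤ (t ^ 2 - (outProb M (xbasis 0) - outProb M (xbasis 1)) ^ 2) / 2 / t
      + (t ^ 2 - (outProb M (ybasis 0) - outProb M (ybasis 1)) ^ 2) / 2 / t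
      + (t ^ 2 - (outProb M (zbasis 0) - outProb M (zbasis 1)) ^ 2) / 2 / t := by
    obtain ht0 | htpos := ht.eq_or_lt
    · simp [← ht0]
    rw [← add_div, ← add_div, le_div_iff₀ htpos]
    nlinarith
  linarith [hbound xbasis (by simp), hbound ybasis (by simp), hbound zbasis (by simp)]

theorem mutInfo_pauli_sum_le_one {S : Type*} [Fintype S] {E : S → Matrix (Fin 2) (Fin 2) ℂ}
    (hE : IsPOVM E) :
    mutInfo xbasis (fun _ => (1 : ℝ) / 2) E + mutInfo ybasis (fun _ => (1 : ℝ) / 2) E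
      + mutInfo zbasis (fun _ => (1 : ℝ) / 2) E ≤ 1 := by
  have hH : shannonEntropy (fun _ : Fin 2 => (1 : ℝ) / 2) = 1 := by simp [shannonEntropy]
  have htrace : ∑ s, (E s).trace.re = 2 := by
    rw [← Complex.re_sum, ← Matrix.trace_sum, hE.2]
    simp
  have hcond : 2 ≤ condEntropy (fun i s => 1 / 2 * outProb (E s) (xbasis i))
      + condEntropy (fun i s => 1 / 2 * outProb (E s) (ybasis i))
      + condEntropy (fun i s => 1 / 2 * outProb (E s) (zbasis i)) := by
    simp only [condEntropy, ← Finset.sum_add_distrib]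
    exact htrace.symm.le.trans
      (Finset.sum_le_sum fun s _ => trace_le_sum_weightedEntropy_pauli (hE.1 s))
  change shannonEntropy _ - condEntropy _ + (shannonEntropy _ - condEntropy _)
    + (shannonEntropy _ - condEntropy _) ≤ 1
  rw [hH]
  linarith

/-- Security of the six-state protocol: for any POVM of the joint receiver and any
coarse-grainings `f` (Bob), `g` (Eve), `h` (Fred) of the outcomes,
`I_x(A:B) + I_y(A:E) + I_z(A:F) ≤ 1`. -/
theorem six_state_security
    {S Bo Ev Fr : Type*} [Fintype S] [Fintype Bo] [DecidableEq Bo]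
    [Fintype Ev] [DecidableEq Ev] [Fintype Fr] [DecidableEq Fr]
    (E : S → Matrix (Fin 2) (Fin 2) ℂ) (hE : IsPOVM E)
    (f : S → Bo) (g : S → Ev) (h : S → Fr) :
    mutInfoCG xbasis (fun _ => (1 : ℝ) / 2) E f
      + mutInfoCG ybasis (fun _ => (1 : ℝ) / 2) E g
      + mutInfoCG zbasis (fun _ => (1 : ℝ) / 2) E h ≤ 1 := by
  have hp : ∀ _ : Fin 2, (0 : ℝ) ≤ 1 / 2 := fun _ => one_half_pos.le
  have hx := mutInfoCG_le_mutInfo hE (outProb_one_pauli (B := xbasis) (by simp)) hp f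
  have hy := mutInfoCG_le_mutInfo hE (outProb_one_pauli (B := ybasis) (by simp)) hp g
  have hz := mutInfoCG_le_mutInfo hE (outProb_one_pauli (B := zbasis) (by simp)) hp h
  linarith [mutInfo_pauli_sum_le_one hE]
end
end
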